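/- arXiv:2603.24309 — 5 statements merged into one kernel-verified Lean document; each statement's English description precedes it below -/
import Mathlib

section
/- Let X ∈ ℝ^{n×p} have full column rank. Then the kernel of the linear map ξ ↦ sym(Xᵀξ) on ℝ^{n×p} equals the set {WX : W ∈ Skew(n)} of matrices of the form WX with W skew-symmetric n×n, and also equals {X(XᵀX)⁻¹Ω + Δ : Ω ∈ Skew(p), Δ ∈ ℝ^{n×p}, ΔᵀX = 0}. -/
open Matrix

/-- For `X ∈ ℝ^{n×p}` of full column rank, the kernel of `ξ ↦ sym(Xᵀξ)` equals
`{WX : W skew}` and also `{X(XᵀX)⁻¹Ω + Δ : Ω skew, ΔᵀX = 0}`. -/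
theorem tangent_space_characterizations {n p : ℕ} (X : Matrix (Fin n) (Fin p) ℝ)
    (hX : X.rank = p) :
    ({ξ : Matrix (Fin n) (Fin p) ℝ | Xᵀ * ξ + ξᵀ * X = 0}
      = {ξ : Matrix (Fin n) (Fin p) ℝ |
          ∃ W : Matrix (Fin n) (Fin n) ℝ, Wᵀ = -W ∧ ξ = W * X}) ∧
    ({ξ : Matrix (Fin n) (Fin p) ℝ | Xᵀ * ξ + ξᵀ * X = 0}
      = {ξ : Matrix (Fin n) (Fin p) ℝ |
          ∃ (Ω : Matrix (Fin p) (Fin p) ℝ) (Δ : Matrix (Fin n) (Fin p) ℝ),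
            Ωᵀ = -Ω ∧ Δᵀ * X = 0 ∧ ξ = X * (Xᵀ * X)⁻¹ * Ω + Δ}) := by
  -- `Xᵀ * X` is invertible
  have hrank : (Xᵀ * X).rank = Fintype.card (Fin p) := by
    rw [Matrix.rank_transpose_mul_self, hX, Fintype.card_fin]
  have hGu : IsUnit (Xᵀ * X) := by
    rw [← Matrix.mulVec_surjective_iff_isUnit]
    have htop : LinearMap.range (Xᵀ * X).mulVecLin = ⊤ := by
      apply Submodule.eq_top_of_finrank_eq
      rw [← Matrix.rank, hrank, Module.finrank_fintype_fun_eq_card]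
    intro y
    obtain ⟨x, hx⟩ := LinearMap.range_eq_top.mp htop y
    exact ⟨x, hx⟩
  have hGd : IsUnit (Xᵀ * X).det := (Matrix.isUnit_iff_isUnit_det _).mp hGu
  have hGi : (Xᵀ * X) * (Xᵀ * X)⁻¹ = 1 := Matrix.mul_nonsing_inv _ hGd
  have hGi' : (Xᵀ * X)⁻¹ * (Xᵀ * X) = 1 := Matrix.nonsing_inv_mul _ hGd
  have hHs : ((Xᵀ * X)⁻¹)ᵀ = (Xᵀ * X)⁻¹ := by
    rw [Matrix.transpose_nonsing_inv]
    congr 1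
    rw [Matrix.transpose_mul, Matrix.transpose_transpose]
  have e1 : ∀ {q : ℕ} (A : Matrix (Fin p) (Fin q) ℝ),
      Xᵀ * (X * ((Xᵀ * X)⁻¹ * A)) = A := by
    intro q A
    rw [← Matrix.mul_assoc, ← Matrix.mul_assoc, hGi, Matrix.one_mul]
  constructor
  · ext ξ
    simp only [Set.mem_setOf_eq]
    constructor
    · intro h
      have h' : ξᵀ * X = -(Xᵀ * ξ) := by
        exact eq_neg_of_add_eq_zero_right h
      have h'' : ∀ {q : ℕ} (A : Matrix (Fin p) (Fin q) ℝ),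
          ξᵀ * (X * A) = -(Xᵀ * (ξ * A)) := by
        intro q A
        rw [← Matrix.mul_assoc, h', Matrix.neg_mul, Matrix.mul_assoc]
      refine ⟨ξ * ((Xᵀ * X)⁻¹ * Xᵀ) - X * ((Xᵀ * X)⁻¹ * ξᵀ)
          - X * ((Xᵀ * X)⁻¹ * (Xᵀ * (ξ * ((Xᵀ * X)⁻¹ * Xᵀ)))), ?_, ?_⟩
      · simp only [Matrix.transpose_sub, Matrix.transpose_mul, Matrix.transpose_transpose,
          hHs, Matrix.mul_assoc]
        rw [h'']
        simp only [Matrix.mul_neg, Matrix.neg_mul]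
        abel
      · simp only [Matrix.sub_mul, Matrix.mul_assoc]
        rw [hGi']
        simp only [Matrix.mul_one]
        rw [h']
        simp only [Matrix.mul_neg]
        abel
    · rintro ⟨W, hW, rfl⟩
      rw [Matrix.transpose_mul, hW]
      simp only [Matrix.neg_mul, Matrix.mul_neg, Matrix.mul_assoc]
      abel
  · ext ξ
    simp only [Set.mem_setOf_eq]
    constructor
    · intro h
      have h' : ξᵀ * X = -(Xᵀ * ξ) := by
        exact eq_neg_of_add_eq_zero_right h
      refine ⟨Xᵀ * ξ, ξ - X * ((Xᵀ * X)⁻¹ * (Xᵀ * ξ)), ?_, ?_, ?_⟩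
      · rw [Matrix.transpose_mul, Matrix.transpose_transpose, h']
      · simp only [Matrix.transpose_sub, Matrix.transpose_mul, Matrix.transpose_transpose,
          hHs, Matrix.sub_mul, Matrix.mul_assoc]
        rw [hGi']
        simp only [Matrix.mul_one, sub_self]
      · simp only [Matrix.mul_assoc]
        abel
    · rintro ⟨Ω, Δ, hΩ, hΔ, rfl⟩
      have hXΔ : Xᵀ * Δ = 0 := by
        have := congrArg Matrix.transpose hΔ
        simpa [Matrix.transpose_mul] using this
      simp only [Matrix.mul_add, Matrix.add_mul, Matrix.transpose_add, Matrix.transpose_mul,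
        Matrix.transpose_transpose, hHs, Matrix.mul_assoc]
      rw [hΔ]
      rw [show Xᵀ * (X * ((Xᵀ * X)⁻¹ * Ω)) = Ω from e1 Ω]
      rw [hXΔ, hGi']
      simp only [Matrix.mul_one, hΩ]
      abel
end

section
/- Let X ∈ ℝ^{n×p} have full column rank. The Frobenius adjoint of the projector Proj_X[Z] = X(XᵀX)⁻¹ skew(XᵀZ) + (I_n − X(XᵀX)⁻¹Xᵀ)Z is given by Proj_X*[Z] = X skew((XᵀX)⁻¹XᵀZ) + (I_n − X(XᵀX)⁻¹Xᵀ)Z. -/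
open Matrix

/-- The oblique projector `Proj_X[Z] = X(XᵀX)⁻¹ skew(XᵀZ) + (I − X(XᵀX)⁻¹Xᵀ)Z`. -/
noncomputable def projX {n p : ℕ} (X Z : Matrix (Fin n) (Fin p) ℝ) :
    Matrix (Fin n) (Fin p) ℝ :=
  X * (Xᵀ * X)⁻¹ * ((1/2 : ℝ) • (Xᵀ * Z - (Xᵀ * Z)ᵀ)) + (1 - X * (Xᵀ * X)⁻¹ * Xᵀ) * Z

/-- The Frobenius adjoint of `Proj_X` is
`Z ↦ X skew((XᵀX)⁻¹XᵀZ) + (I − X(XᵀX)⁻¹Xᵀ)Z`. -/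
theorem projX_adjoint {n p : ℕ} (X : Matrix (Fin n) (Fin p) ℝ) (hX : X.rank = p) :
    ∀ ξ ζ : Matrix (Fin n) (Fin p) ℝ,
      ((projX X ξ)ᵀ * ζ).trace
        = (ξᵀ * (X * ((1/2 : ℝ) • ((Xᵀ * X)⁻¹ * Xᵀ * ζ - ((Xᵀ * X)⁻¹ * Xᵀ * ζ)ᵀ))
            + (1 - X * (Xᵀ * X)⁻¹ * Xᵀ) * ζ)).trace := by
  intro ξ ζ
  have hA : ((Xᵀ * X)⁻¹)ᵀ = (Xᵀ * X)⁻¹ := by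
    rw [transpose_nonsing_inv, transpose_mul, transpose_transpose]
  have key : (Xᵀ * (ξ * ((Xᵀ * X)⁻¹ * (Xᵀ * ζ)))).trace
      = (ξᵀ * (X * (ζᵀ * (X * (Xᵀ * X)⁻¹)))).trace := by
    rw [← trace_transpose (Xᵀ * (ξ * ((Xᵀ * X)⁻¹ * (Xᵀ * ζ))))]
    simp only [transpose_mul, transpose_transpose, hA, ← Matrix.mul_assoc]
    rw [Matrix.mul_assoc (ζᵀ * X * (Xᵀ * X)⁻¹) ξᵀ X, trace_mul_comm]
    simp only [Matrix.mul_assoc]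
  simp only [projX, transpose_add, transpose_mul, transpose_sub, transpose_smul, transpose_transpose,
    transpose_one, hA, Matrix.add_mul, Matrix.mul_add, Matrix.sub_mul, Matrix.mul_sub,
    Matrix.smul_mul, Matrix.mul_smul, trace_add, trace_sub, trace_smul,
    Matrix.one_mul, Matrix.mul_one, Matrix.mul_assoc]
  rw [key]
end

section
/- Let X ∈ ℝ^{n×p} have full column rank. The bilinear form g(ξ,ζ) := ⟨ξ, (XXᵀ + I_n − X(XᵀX)⁻¹Xᵀ)ζ⟩ (Frobenius inner product) is a symmetric positive definite inner product on ℝ^{n×p}, and with respect to g the tangent space T = {ξ : Xᵀξ + ξᵀX = 0} and the normal space N_X = {X(XᵀX)⁻¹S : S ∈ Sym(p)} are g-orthogonal. -/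
open Matrix

/-- The canonical metric `g(ξ,ζ) = ⟨ξ, (XXᵀ + I_n − X(XᵀX)⁻¹Xᵀ)ζ⟩` (Frobenius). -/
noncomputable def gcan {n p : ℕ} (X ξ ζ : Matrix (Fin n) (Fin p) ℝ) : ℝ :=
  (ξᵀ * ((X * Xᵀ + 1 - X * (Xᵀ * X)⁻¹ * Xᵀ) * ζ)).trace

lemma trace_tmul_self_nonneg {n p : ℕ} (A : Matrix (Fin n) (Fin p) ℝ) :
    0 ≤ (Aᵀ * A).trace := by
  have h : (Aᵀ * A).trace = ∑ j, ∑ i, (A i j)^2 := by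
    simp [Matrix.trace, Matrix.diag, Matrix.mul_apply, sq]
  rw [h]
  exact Finset.sum_nonneg fun _ _ => Finset.sum_nonneg fun _ _ => sq_nonneg _

lemma trace_tmul_self_pos {n p : ℕ} (A : Matrix (Fin n) (Fin p) ℝ) (hA : A ≠ 0) :
    0 < (Aᵀ * A).trace := by
  have h : (Aᵀ * A).trace = ∑ j, ∑ i, (A i j)^2 := by
    simp [Matrix.trace, Matrix.diag, Matrix.mul_apply, sq]
  obtain ⟨i, j, hij⟩ : ∃ i j, A i j ≠ 0 := by
    by_contra hc
    push_neg at hc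
    exact hA (by ext i j; simpa using hc i j)
  rw [h]
  refine Finset.sum_pos' (fun _ _ => Finset.sum_nonneg fun _ _ => sq_nonneg _)
    ⟨j, Finset.mem_univ _, Finset.sum_pos' (fun _ _ => sq_nonneg _)
      ⟨i, Finset.mem_univ _, ?_⟩⟩
  positivity

/-- `g` is a symmetric positive definite inner product on `ℝ^{n×p}`, and the tangent
space `T = {ξ : Xᵀξ + ξᵀX = 0}` and normal space `N_X = {X(XᵀX)⁻¹S : S ∈ Sym(p)}`
are `g`-orthogonal. -/
theorem gcan_inner_product_and_orthogonality {n p : ℕ}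
    (X : Matrix (Fin n) (Fin p) ℝ) (hX : X.rank = p) :
    (∀ ξ ζ : Matrix (Fin n) (Fin p) ℝ, gcan X ξ ζ = gcan X ζ ξ) ∧
    (∀ ξ : Matrix (Fin n) (Fin p) ℝ, ξ ≠ 0 → 0 < gcan X ξ ξ) ∧
    (∀ ξ : Matrix (Fin n) (Fin p) ℝ, Xᵀ * ξ + ξᵀ * X = 0 →
      ∀ S : Matrix (Fin p) (Fin p) ℝ, S.IsSymm →
        gcan X ξ (X * (Xᵀ * X)⁻¹ * S) = 0) := by
  -- `XᵀX` is invertible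
  have hrank : (Xᵀ * X).rank = Fintype.card (Fin p) := by
    rw [Matrix.rank_transpose_mul_self, hX, Fintype.card_fin]
  have hunit : IsUnit (Xᵀ * X) := by
    rw [← Matrix.mulVec_injective_iff_isUnit]
    have hsurj : Function.Surjective (Xᵀ * X).mulVecLin := by
      rw [← LinearMap.range_eq_top]
      apply Submodule.eq_top_of_finrank_eq
      rw [← Matrix.rank, hrank, Module.finrank_fintype_fun_eq_card]
    exact LinearMap.injective_iff_surjective.mpr hsurj
  have hdet : IsUnit (Xᵀ * X).det := (Matrix.isUnit_iff_isUnit_det _).mp hunit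
  have hinv : (Xᵀ * X)⁻¹ * (Xᵀ * X) = 1 := Matrix.nonsing_inv_mul _ hdet
  have hinv' : (Xᵀ * X) * (Xᵀ * X)⁻¹ = 1 := Matrix.mul_nonsing_inv _ hdet
  have hsymminv : ((Xᵀ * X)⁻¹)ᵀ = (Xᵀ * X)⁻¹ := by
    rw [Matrix.transpose_nonsing_inv]
    congr 1
    rw [Matrix.transpose_mul, Matrix.transpose_transpose]
  set P : Matrix (Fin n) (Fin n) ℝ := X * (Xᵀ * X)⁻¹ * Xᵀ with hP
  have hPsymm : Pᵀ = P := by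
    rw [hP, Matrix.transpose_mul, Matrix.transpose_mul, Matrix.transpose_transpose,
      hsymminv, Matrix.mul_assoc]
  have hPP : P * P = P := by
    rw [hP]
    calc X * (Xᵀ * X)⁻¹ * Xᵀ * (X * (Xᵀ * X)⁻¹ * Xᵀ)
        = X * ((Xᵀ * X)⁻¹ * ((Xᵀ * X) * ((Xᵀ * X)⁻¹ * Xᵀ))) := by
          simp only [Matrix.mul_assoc]
      _ = X * (Xᵀ * X)⁻¹ * Xᵀ := by
          rw [← Matrix.mul_assoc (Xᵀ * X), hinv', Matrix.one_mul, Matrix.mul_assoc]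
  set M : Matrix (Fin n) (Fin n) ℝ := X * Xᵀ + 1 - P with hM
  have hMsymm : Mᵀ = M := by
    rw [hM, Matrix.transpose_sub, Matrix.transpose_add, Matrix.transpose_mul,
      Matrix.transpose_transpose, Matrix.transpose_one, hPsymm]
  have hg : ∀ ξ ζ : Matrix (Fin n) (Fin p) ℝ, gcan X ξ ζ = (ξᵀ * (M * ζ)).trace := by
    intro ξ ζ; rfl
  refine ⟨?_, ?_, ?_⟩
  · -- symmetry
    intro ξ ζ
    rw [hg, hg]
    calc (ξᵀ * (M * ζ)).trace = (ξᵀ * (M * ζ))ᵀ.trace := (Matrix.trace_transpose _).symm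
      _ = (ζᵀ * (Mᵀ * ξ)).trace := by
          rw [Matrix.transpose_mul, Matrix.transpose_mul, Matrix.transpose_transpose,
            Matrix.mul_assoc]
      _ = (ζᵀ * (M * ξ)).trace := by rw [hMsymm]
  · -- positive definiteness
    intro ξ hξ
    set Q : Matrix (Fin n) (Fin n) ℝ := 1 - P with hQ
    have hQsymm : Qᵀ = Q := by rw [hQ, Matrix.transpose_sub, Matrix.transpose_one, hPsymm]
    have hQQ : Q * Q = Q := by
      rw [hQ]
      simp only [Matrix.sub_mul, Matrix.mul_sub, Matrix.one_mul, Matrix.mul_one, hPP]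
      abel
    have key : gcan X ξ ξ
        = ((Xᵀ * ξ)ᵀ * (Xᵀ * ξ)).trace + ((Q * ξ)ᵀ * (Q * ξ)).trace := by
      rw [hg]
      have e1 : (Xᵀ * ξ)ᵀ * (Xᵀ * ξ) = ξᵀ * (X * Xᵀ * ξ) := by
        rw [Matrix.transpose_mul, Matrix.transpose_transpose]
        simp only [Matrix.mul_assoc]
      have e2 : (Q * ξ)ᵀ * (Q * ξ) = ξᵀ * (Q * ξ) := by
        rw [Matrix.transpose_mul, hQsymm, Matrix.mul_assoc, ← Matrix.mul_assoc Q, hQQ]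
      have e3 : M * ξ = X * Xᵀ * ξ + Q * ξ := by
        rw [hM, hQ]
        rw [Matrix.sub_mul, Matrix.add_mul]
        rw [Matrix.sub_mul, Matrix.one_mul]
        abel
      rw [e1, e2, e3, Matrix.mul_add, Matrix.trace_add]
    rw [key]
    by_cases h : Xᵀ * ξ = 0
    · have hPξ : P * ξ = 0 := by
        rw [hP, Matrix.mul_assoc, Matrix.mul_assoc, h, Matrix.mul_zero, Matrix.mul_zero]
      have hQξ : Q * ξ = ξ := by rw [hQ, Matrix.sub_mul, Matrix.one_mul, hPξ, sub_zero]
      have h2 : 0 < ((Q * ξ)ᵀ * (Q * ξ)).trace := by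
        rw [hQξ]; exact trace_tmul_self_pos ξ hξ
      have h1 : 0 ≤ ((Xᵀ * ξ)ᵀ * (Xᵀ * ξ)).trace := trace_tmul_self_nonneg _
      linarith
    · have h1 : 0 < ((Xᵀ * ξ)ᵀ * (Xᵀ * ξ)).trace := trace_tmul_self_pos _ h
      have h2 : 0 ≤ ((Q * ξ)ᵀ * (Q * ξ)).trace := trace_tmul_self_nonneg _
      linarith
  · -- orthogonality
    intro ξ hξ S hS
    have hskew : ξᵀ * X = -(Xᵀ * ξ) := by
      have := hξ
      linear_combination (norm := abel) this
    have hMterm : M * (X * (Xᵀ * X)⁻¹ * S) = X * S := by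
      have t1 : X * Xᵀ * (X * (Xᵀ * X)⁻¹ * S) = X * S := by
        calc X * Xᵀ * (X * (Xᵀ * X)⁻¹ * S)
            = X * ((Xᵀ * X) * (Xᵀ * X)⁻¹ * S) := by simp only [Matrix.mul_assoc]
          _ = X * S := by rw [hinv', Matrix.one_mul]
      have t2 : P * (X * (Xᵀ * X)⁻¹ * S) = X * (Xᵀ * X)⁻¹ * S := by
        calc P * (X * (Xᵀ * X)⁻¹ * S)
            = X * ((Xᵀ * X)⁻¹ * ((Xᵀ * X) * ((Xᵀ * X)⁻¹ * S))) := by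
              rw [hP]; simp only [Matrix.mul_assoc]
          _ = X * ((Xᵀ * X)⁻¹ * S) := by
              rw [← Matrix.mul_assoc (Xᵀ * X), hinv', Matrix.one_mul]
          _ = X * (Xᵀ * X)⁻¹ * S := by rw [Matrix.mul_assoc]
      rw [hM, Matrix.sub_mul, Matrix.add_mul, Matrix.one_mul, t1, t2]
      abel
    rw [hg, hMterm]
    have key : (ξᵀ * (X * S)).trace = ((Xᵀ * ξ) * S).trace := by
      calc (ξᵀ * (X * S)).trace = (ξᵀ * (X * S))ᵀ.trace := (Matrix.trace_transpose _).symm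
        _ = (Sᵀ * (Xᵀ * ξ)).trace := by
            rw [Matrix.transpose_mul, Matrix.transpose_mul, Matrix.transpose_transpose,
              Matrix.mul_assoc]
        _ = (S * (Xᵀ * ξ)).trace := by rw [hS]
        _ = ((Xᵀ * ξ) * S).trace := Matrix.trace_mul_comm _ _
    have key2 : (ξᵀ * (X * S)).trace = -((Xᵀ * ξ) * S).trace := by
      rw [← Matrix.mul_assoc, hskew, Matrix.neg_mul, Matrix.trace_neg]
    linarith [key, key2]
end

section
/- Let β > 0 and X ∈ ℝ^{n×p} of full column rank. Define g^β(ξ,ζ) := ⟨(I_n − (1−β)X(XᵀX)⁻¹Xᵀ) ζ (XᵀX)⁻¹, ξ⟩ with the Frobenius inner product. Then g^β is a symmetric positive definite inner product on ℝ^{n×p}, and the tangent space T = {ξ : Xᵀξ + ξᵀX = 0} and the normal space N_X = {X(XᵀX)⁻¹S : S ∈ Sym(p)} are g^β-orthogonal. -/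
/-!
Write `P = X(XᵀX)⁻¹Xᵀ` for the orthogonal projection onto the column space of `X` and
`M = 1 - (1 - β)P`, so that `g^β(ξ, ζ) = tr(ξᵀ M ζ (XᵀX)⁻¹)`; symmetry of `g^β` is that of `M`
and `(XᵀX)⁻¹`. As `P` is a symmetric idempotent, `M = (1 - P)ᵀ(1 - P) + β PᵀP` is positive
semidefinite and has inverse `1 - (1 - β⁻¹)P`, so it is positive definite. Factoring
`M = BᵀB` and `(XᵀX)⁻¹ = CᵀC` with `B`, `C` invertible turns `g^β(ξ, ξ)` into the squared
Frobenius norm of `BξCᵀ`. Finally `MX = βX`, so `g^β(ξ, X(XᵀX)⁻¹S)` is `β` times the trace of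
the skew-symmetric `ξᵀX` against the symmetric `(XᵀX)⁻¹S(XᵀX)⁻¹`, which vanishes.
-/

open Matrix

/-- The `β`-metric `g^β(ξ,ζ) = ⟨(I_n − (1−β)X(XᵀX)⁻¹Xᵀ) ζ (XᵀX)⁻¹, ξ⟩` (Frobenius). -/
noncomputable def gbeta {n p : ℕ} (β : ℝ) (X ξ ζ : Matrix (Fin n) (Fin p) ℝ) : ℝ :=
  ((((1 - (1 - β) • (X * (Xᵀ * X)⁻¹ * Xᵀ)) * ζ * (Xᵀ * X)⁻¹)ᵀ) * ξ).trace

open scoped MatrixOrder ComplexOrder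

namespace Matrix

theorem mulVec_injective_of_rank_eq_card {m n K : Type*} [Fintype n] [Field K]
    {X : Matrix m n K} (hX : X.rank = Fintype.card n) : Function.Injective X.mulVec := by
  have h := X.mulVecLin.finrank_range_add_finrank_ker
  rw [← rank, hX, Module.finrank_fintype_fun_eq_card, add_eq_left,
    Submodule.finrank_eq_zero, LinearMap.ker_eq_bot] at h
  exact h

section RCLike

variable {m n 𝕜 : Type*} [Fintype m] [Fintype n] [DecidableEq n] [RCLike 𝕜]

theorem PosDef.exists_isUnit_eq_conjTranspose_mul_self {M : Matrix n n 𝕜} (hM : M.PosDef) :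
    ∃ B, IsUnit B ∧ M = Bᴴ * B := by
  simpa [star_eq_conjTranspose] using
    CStarAlgebra.isStrictlyPositive_iff_eq_star_mul_self.mp hM.isStrictlyPositive

theorem trace_conjTranspose_mul_mul_mul_pos [DecidableEq m] {M : Matrix m m 𝕜}
    {A : Matrix n n 𝕜} (hM : M.PosDef) (hA : A.PosDef) {ξ : Matrix m n 𝕜} (hξ : ξ ≠ 0) :
    0 < (ξᴴ * M * ξ * A).trace := by
  obtain ⟨B, hB, rfl⟩ := hM.exists_isUnit_eq_conjTranspose_mul_self
  obtain ⟨C, hC, rfl⟩ := hA.exists_isUnit_eq_conjTranspose_mul_self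
  set D := B * ξ * Cᴴ
  have hD : D ≠ 0 := by
    let := hB.invertible
    let := hC.star.invertible
    intro h
    refine hξ (mul_left_injective_of_invertible Cᴴ (mul_right_injective_of_invertible B ?_))
    simpa [D, Matrix.mul_assoc] using h
  have hfrob : (ξᴴ * (Bᴴ * B) * ξ * (Cᴴ * C)).trace = (Dᴴ * D).trace := by
    rw [← Matrix.mul_assoc, trace_mul_comm]
    simp only [D, conjTranspose_mul, conjTranspose_conjTranspose, Matrix.mul_assoc]
  rw [hfrob]
  exact (posSemidef_conjTranspose_mul_self D).trace_nonneg.lt_of_ne'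
    (trace_conjTranspose_mul_self_eq_zero_iff.not.mpr hD)

theorem IsStarProjection.posDef_one_sub_smul {P : Matrix n n 𝕜} (hP : IsStarProjection P)
    {β : ℝ} (hβ : 0 < β) : (1 - (1 - β) • P).PosDef := by
  have hPh : Pᴴ = P := hP.isSelfAdjoint
  have hPP : P * P = P := hP.isIdempotentElem
  have hpsd : (1 - (1 - β) • P).PosSemidef := by
    have : 1 - (1 - β) • P = (1 - P)ᴴ * (1 - P) + β • (Pᴴ * P) := by
      simp only [conjTranspose_sub, conjTranspose_one, hPh, sub_mul, mul_sub, hPP, mul_one, one_mul]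
      module
    rw [this]
    exact (posSemidef_conjTranspose_mul_self _).add
      ((posSemidef_conjTranspose_mul_self _).smul hβ.le)
  refine hpsd.posDef_iff_isUnit.mpr (IsUnit.of_mul_eq_one (1 - (1 - β⁻¹) • P) ?_)
  simp only [sub_mul, mul_sub, mul_one, one_mul, smul_mul_smul_comm, hPP]
  rw [mul_inv_cancel₀ hβ.ne']
  module

end RCLike

section CommRing

variable {m n R : Type*} [Fintype m] [Fintype n] [CommRing R]

theorem trace_transpose_mul_mul_mul_comm {M : Matrix m m R} {A : Matrix n n R} (hM : M.IsSymm)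
    (hA : A.IsSymm) (ξ ζ : Matrix m n R) : (ξᵀ * M * ζ * A).trace = (ζᵀ * M * ξ * A).trace := by
  rw [← trace_transpose]
  simp only [transpose_mul, transpose_transpose, hM.eq, hA.eq, Matrix.mul_assoc]
  rw [trace_mul_comm]
  simp only [Matrix.mul_assoc]

theorem trace_mul_eq_zero_of_add_transpose_eq_zero [IsAddTorsionFree R] {Y W : Matrix n n R}
    (hY : Y + Yᵀ = 0) (hW : W.IsSymm) : (Y * W).trace = 0 := by
  rw [← self_eq_neg]
  calc (Y * W).trace = (Wᵀ * Yᵀ).trace := by rw [← transpose_mul, trace_transpose]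
    _ = -(Y * W).trace := by
      rw [hW.eq, eq_neg_of_add_eq_zero_right hY, mul_neg, trace_neg, trace_mul_comm]

variable [DecidableEq n]

noncomputable def colSpaceProj (X : Matrix m n R) : Matrix m m R := X * (Xᵀ * X)⁻¹ * Xᵀ

theorem isSymm_inv_transpose_mul_self (X : Matrix m n R) : ((Xᵀ * X)⁻¹).IsSymm :=
  IsSymm.inv (by rw [IsSymm, transpose_mul, transpose_transpose])

theorem isSymm_colSpaceProj (X : Matrix m n R) : (colSpaceProj X).IsSymm := by
  rw [IsSymm, colSpaceProj, transpose_mul, transpose_mul, transpose_transpose,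
    (isSymm_inv_transpose_mul_self X).eq, Matrix.mul_assoc]

theorem colSpaceProj_mul_self {X : Matrix m n R} (hX : IsUnit (Xᵀ * X)) :
    colSpaceProj X * X = X := by
  rw [colSpaceProj, Matrix.mul_assoc, Matrix.mul_assoc,
    nonsing_inv_mul _ ((isUnit_iff_isUnit_det _).mp hX), Matrix.mul_one]

theorem isIdempotentElem_colSpaceProj {X : Matrix m n R} (hX : IsUnit (Xᵀ * X)) :
    IsIdempotentElem (colSpaceProj X) := by
  unfold IsIdempotentElem
  nth_rw 2 [colSpaceProj]
  rw [← Matrix.mul_assoc, ← Matrix.mul_assoc, colSpaceProj_mul_self hX, colSpaceProj]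

end CommRing

theorem isStarProjection_colSpaceProj {m n : Type*} [Fintype m] [Fintype n] [DecidableEq n]
    {X : Matrix m n ℝ} (hX : IsUnit (Xᵀ * X)) : IsStarProjection (colSpaceProj X) :=
  ⟨isIdempotentElem_colSpaceProj hX, by
    rw [IsSelfAdjoint, star_eq_conjTranspose, conjTranspose_eq_transpose_of_trivial]
    exact (isSymm_colSpaceProj X).eq⟩

end Matrix

theorem gbeta_eq_trace {n p : ℕ} (β : ℝ) (X ξ ζ : Matrix (Fin n) (Fin p) ℝ) :
    gbeta β X ξ ζ = (ξᵀ * (1 - (1 - β) • colSpaceProj X) * ζ * (Xᵀ * X)⁻¹).trace := by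
  rw [gbeta, ← trace_transpose, transpose_mul, transpose_transpose, colSpaceProj]
  simp only [Matrix.mul_assoc]

theorem gbeta_tangent_normal_eq_zero {n p : ℕ} (β : ℝ) {X ξ : Matrix (Fin n) (Fin p) ℝ}
    (hX : IsUnit (Xᵀ * X)) (hξ : Xᵀ * ξ + ξᵀ * X = 0) {S : Matrix (Fin p) (Fin p) ℝ}
    (hS : S.IsSymm) : gbeta β X ξ (X * (Xᵀ * X)⁻¹ * S) = 0 := by
  set A := (Xᵀ * X)⁻¹
  have hA : A.IsSymm := isSymm_inv_transpose_mul_self X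
  have hMX : (1 - (1 - β) • colSpaceProj X) * X = β • X := by
    rw [Matrix.sub_mul, Matrix.one_mul, Matrix.smul_mul, colSpaceProj_mul_self hX]
    module
  have hskew : ξᵀ * X + (ξᵀ * X)ᵀ = 0 := by
    rwa [transpose_mul, transpose_transpose, add_comm]
  have hW : (A * S * A).IsSymm := by
    simp only [IsSymm, transpose_mul, hA.eq, hS.eq, Matrix.mul_assoc]
  rw [gbeta_eq_trace]
  calc (ξᵀ * (1 - (1 - β) • colSpaceProj X) * (X * A * S) * A).trace
      = (ξᵀ * ((1 - (1 - β) • colSpaceProj X) * X) * (A * S * A)).trace := by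
        simp only [Matrix.mul_assoc]
    _ = β * (ξᵀ * X * (A * S * A)).trace := by
        rw [hMX, Matrix.mul_smul, Matrix.smul_mul, trace_smul, smul_eq_mul]
    _ = 0 := by rw [trace_mul_eq_zero_of_add_transpose_eq_zero hskew hW, mul_zero]

/-- For `β > 0`, `g^β` is a symmetric positive definite inner product on `ℝ^{n×p}`,
and the tangent space `T = {ξ : Xᵀξ + ξᵀX = 0}` and normal space
`N_X = {X(XᵀX)⁻¹S : S ∈ Sym(p)}` are `g^β`-orthogonal. -/
theorem gbeta_inner_product_and_orthogonality {n p : ℕ} (β : ℝ) (hβ : 0 < β)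
    (X : Matrix (Fin n) (Fin p) ℝ) (hX : X.rank = p) :
    (∀ ξ ζ : Matrix (Fin n) (Fin p) ℝ, gbeta β X ξ ζ = gbeta β X ζ ξ) ∧
    (∀ ξ : Matrix (Fin n) (Fin p) ℝ, ξ ≠ 0 → 0 < gbeta β X ξ ξ) ∧
    (∀ ξ : Matrix (Fin n) (Fin p) ℝ, Xᵀ * ξ + ξᵀ * X = 0 →
      ∀ S : Matrix (Fin p) (Fin p) ℝ, S.IsSymm →
        gbeta β X ξ (X * (Xᵀ * X)⁻¹ * S) = 0) := by
  have hK : (Xᵀ * X).PosDef := by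
    simpa using PosDef.conjTranspose_mul_self X
      (mulVec_injective_of_rank_eq_card (by rwa [Fintype.card_fin]))
  have hM := (isStarProjection_colSpaceProj hK.isUnit).posDef_one_sub_smul hβ
  refine ⟨fun ξ ζ => ?_, fun ξ hξ => ?_,
    fun ξ hξ S hS => gbeta_tangent_normal_eq_zero β hK.isUnit hξ hS⟩
  · simp only [gbeta_eq_trace]
    exact trace_transpose_mul_mul_mul_comm (isSymm_one.sub ((isSymm_colSpaceProj X).smul _))
      (isSymm_inv_transpose_mul_self X) ξ ζ
  · rw [gbeta_eq_trace]
    simpa using trace_conjTranspose_mul_mul_mul_pos hM hK.inv hξ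
end

section
/- Let E be a finite-dimensional real inner product space with decomposition E = T ⊕ N, projector P onto T along N, P⊥ = Id − P, and G = P* G_T P + (P⊥)* G_N P⊥ as above (G_T, G_N symmetric, positive definite on T and N respectively). Define G̃_T := P* G_T P regarded as a map T → N^{⊥} and G̃_N := (P⊥)* G_N P⊥ regarded as a map N → T^{⊥}, where ⊥ denotes Euclidean orthogonal complement. Then G̃_T and G̃_N are bijective, and G⁻¹ = P ∘ G̃_T⁻¹ ∘ P* + P⊥ ∘ G̃_N⁻¹ ∘ (P⊥)*. -/
/-! `P* G_T P` has range inside `range P* = (ker P)^⊥ = N^⊥`, and on `T = range P` it satisfies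
`⟪P* G_T P ξ, ξ⟫ = ⟪G_T ξ, ξ⟫`, so positivity makes it injective on `T`; since
`dim T = dim E - dim N = dim N^⊥` it is bijective onto `N^⊥`. The same holds for `P⊥`, whose
range and kernel are `N` and `T`. Finally `P* z + (P⊥)* z = (P + P⊥)* z = z`. -/

open LinearMap

namespace LinearMap

variable {E : Type*} [NormedAddCommGroup E] [InnerProductSpace ℝ E] [FiniteDimensional ℝ E]

theorem adjoint_apply_mem_orthogonal_ker (R : E →ₗ[ℝ] E) (y : E) : adjoint R y ∈ (ker R)ᗮ := by
  rw [orthogonal_ker]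
  exact mem_range_self _ y

theorem finrank_range_eq_finrank_orthogonal_ker (R : E →ₗ[ℝ] E) :
    Module.finrank ℝ (range R) = Module.finrank ℝ (ker R)ᗮ := by
  have := R.finrank_range_add_finrank_ker
  have := (ker R).finrank_add_finrank_orthogonal
  omega

theorem adjoint_apply_add_adjoint_id_sub_apply (P : E →ₗ[ℝ] E) (z : E) :
    adjoint P z + adjoint (LinearMap.id - P) z = z := by
  simp

/-- The paper's `G̃_T` for `R = P`, `G = G_T`, and its `G̃_N` for `R = P⊥`, `G = G_N`. -/
noncomputable def compression (R G : E →ₗ[ℝ] E) : range R →ₗ[ℝ] (ker R)ᗮ :=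
  codRestrict _ ((adjoint R ∘ₗ G ∘ₗ R) ∘ₗ (range R).subtype)
    fun _ => adjoint_apply_mem_orthogonal_ker R _

variable {R : E →ₗ[ℝ] E} (G : E →ₗ[ℝ] E)

theorem inner_adjoint_comp_comp_apply_self (hR : IsIdempotentElem R) {ξ : E}
    (hξ : ξ ∈ range R) :
    inner ℝ ((adjoint R ∘ₗ G ∘ₗ R) ξ) ξ = inner ℝ (G ξ) ξ := by
  rw [comp_apply, adjoint_inner_left, comp_apply, hR.mem_range_iff.mp hξ]

theorem bijective_compression (hR : IsIdempotentElem R)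
    (hG : ∀ ξ ∈ range R, ξ ≠ 0 → 0 < (inner ℝ (G ξ) ξ : ℝ)) :
    Function.Bijective (compression R G) := by
  have hinj : Function.Injective (compression R G) := by
    rw [injective_iff_map_eq_zero]
    rintro ⟨ξ, hξ⟩ hzero
    by_contra hne
    have hpos := hG ξ hξ fun h => hne (Subtype.ext h)
    have hvanish : (adjoint R ∘ₗ G ∘ₗ R) ξ = 0 := congrArg Subtype.val hzero
    rw [← inner_adjoint_comp_comp_apply_self G hR hξ, hvanish, inner_zero_left] at hpos
    exact lt_irrefl 0 hpos
  exact ⟨hinj, (injective_iff_surjective_of_finrank_eq_finrank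
    (finrank_range_eq_finrank_orthogonal_ker R)).mp hinj⟩

theorem existsUnique_mem_range_adjoint_comp_comp_eq (hR : IsIdempotentElem R)
    (hG : ∀ ξ ∈ range R, ξ ≠ 0 → 0 < (inner ℝ (G ξ) ξ : ℝ)) {y : E} (hy : y ∈ (ker R)ᗮ) :
    ∃! ξ : E, ξ ∈ range R ∧ (adjoint R ∘ₗ G ∘ₗ R) ξ = y := by
  obtain ⟨⟨ξ, hξ⟩, hξy, huniq⟩ := (bijective_compression G hR hG).existsUnique ⟨y, hy⟩
  refine ⟨ξ, ⟨hξ, congrArg Subtype.val hξy⟩, fun η ⟨hη, hηy⟩ => ?_⟩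
  exact congrArg Subtype.val (huniq ⟨η, hη⟩ (Subtype.ext hηy))

end LinearMap

theorem metric_inverse_formula_general {E : Type*}
    [NormedAddCommGroup E] [InnerProductSpace ℝ E] [FiniteDimensional ℝ E]
    (T N : Submodule ℝ E)
    (P : E →ₗ[ℝ] E) (hPP : P ∘ₗ P = P)
    (hrange : LinearMap.range P = T) (hker : LinearMap.ker P = N)
    (GT GN : E →ₗ[ℝ] E)
    (hGTpos : ∀ ξ ∈ T, ξ ≠ 0 → 0 < (inner ℝ (GT ξ) ξ : ℝ))
    (hGNpos : ∀ ξ ∈ N, ξ ≠ 0 → 0 < (inner ℝ (GN ξ) ξ : ℝ)) :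
    let Q : E →ₗ[ℝ] E := LinearMap.id - P
    let GT' : E →ₗ[ℝ] E := LinearMap.adjoint P ∘ₗ GT ∘ₗ P
    let GN' : E →ₗ[ℝ] E := LinearMap.adjoint Q ∘ₗ GN ∘ₗ Q
    (∀ ξ ∈ T, GT' ξ ∈ Nᗮ) ∧
    (∀ y ∈ Nᗮ, ∃! ξ : E, ξ ∈ T ∧ GT' ξ = y) ∧
    (∀ ν ∈ N, GN' ν ∈ Tᗮ) ∧
    (∀ y ∈ Tᗮ, ∃! ν : E, ν ∈ N ∧ GN' ν = y) ∧
    (∀ z ξ ν : E, ξ ∈ T → ν ∈ N →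
      GT' ξ = LinearMap.adjoint P z → GN' ν = LinearMap.adjoint Q z →
      (GT' + GN') (ξ + ν) = z) := by
  intro Q GT' GN'
  have hP : IsIdempotentElem P := hPP
  have hQ : IsIdempotentElem Q := hP.one_sub
  have hQrange : range Q = N := hker ▸ hP.ker_eq_range.symm
  have hQker : ker Q = T := hrange ▸ hP.range_eq_ker.symm
  subst hrange hker
  refine ⟨fun ξ _ => adjoint_apply_mem_orthogonal_ker P _,
    fun _ => existsUnique_mem_range_adjoint_comp_comp_eq GT hP hGTpos,
    fun ν _ => hQker ▸ adjoint_apply_mem_orthogonal_ker Q _,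
    fun y hy => ?_, fun z ξ ν hξ hν hGTξ hGNν => ?_⟩
  · rw [← hQrange] at hGNpos ⊢
    exact existsUnique_mem_range_adjoint_comp_comp_eq GN hQ hGNpos (hQker ▸ hy)
  · have hGTν : GT' ν = 0 := by simp [GT', mem_ker.mp hν]
    have hGNξ : GN' ξ = 0 := by simp [GN', mem_ker.mp (hQker ▸ hξ : ξ ∈ ker Q)]
    rw [LinearMap.add_apply, map_add, map_add, hGTν, hGNξ, add_zero, zero_add, hGTξ, hGNν]
    exact adjoint_apply_add_adjoint_id_sub_apply P z

/-- With `E = T ⊕ N`, projector `P` onto `T` along `N`, `P⊥ = Id − P`, and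
`G = P* G_T P + (P⊥)* G_N P⊥`, the operators `G̃_T := P* G_T P : T → N^⊥` and
`G̃_N := (P⊥)* G_N P⊥ : N → T^⊥` are bijective, and
`G⁻¹ = P ∘ G̃_T⁻¹ ∘ P* + P⊥ ∘ G̃_N⁻¹ ∘ (P⊥)*`, expressed as: whenever `ξ ∈ T` and
`ν ∈ N` satisfy `G̃_T ξ = P* z` and `G̃_N ν = (P⊥)* z`, then `G(ξ + ν) = z`. -/
theorem metric_inverse_formula {E : Type*}
    [NormedAddCommGroup E] [InnerProductSpace ℝ E] [FiniteDimensional ℝ E]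
    (T N : Submodule ℝ E) (hTN : IsCompl T N)
    (P : E →ₗ[ℝ] E) (hPP : P ∘ₗ P = P)
    (hrange : LinearMap.range P = T) (hker : LinearMap.ker P = N)
    (GT GN : E →ₗ[ℝ] E)
    (hGTsym : ∀ ξ ζ : E, (inner ℝ (GT ξ) ζ : ℝ) = inner ℝ ξ (GT ζ))
    (hGNsym : ∀ ξ ζ : E, (inner ℝ (GN ξ) ζ : ℝ) = inner ℝ ξ (GN ζ))
    (hGTpos : ∀ ξ ∈ T, ξ ≠ 0 → 0 < (inner ℝ (GT ξ) ξ : ℝ))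
    (hGNpos : ∀ ξ ∈ N, ξ ≠ 0 → 0 < (inner ℝ (GN ξ) ξ : ℝ)) :
    let Q : E →ₗ[ℝ] E := LinearMap.id - P
    let GT' : E →ₗ[ℝ] E := LinearMap.adjoint P ∘ₗ GT ∘ₗ P
    let GN' : E →ₗ[ℝ] E := LinearMap.adjoint Q ∘ₗ GN ∘ₗ Q
    (∀ ξ ∈ T, GT' ξ ∈ Nᗮ) ∧
    (∀ y ∈ Nᗮ, ∃! ξ : E, ξ ∈ T ∧ GT' ξ = y) ∧
    (∀ ν ∈ N, GN' ν ∈ Tᗮ) ∧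
    (∀ y ∈ Tᗮ, ∃! ν : E, ν ∈ N ∧ GN' ν = y) ∧
    (∀ z ξ ν : E, ξ ∈ T → ν ∈ N →
      GT' ξ = LinearMap.adjoint P z → GN' ν = LinearMap.adjoint Q z →
      (GT' + GN') (ξ + ν) = z) :=
  metric_inverse_formula_general T N P hPP hrange hker GT GN hGTpos hGNpos
end
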